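/- Let R = K[x,y]/(y² − x³ − ax − b) be the coordinate ring of a nonsingular elliptic curve over a field K, and let P = (α,β), Q = (α',β') be points on the curve with α ≠ α'. Then the product of maximal ideals (x−α, y−β)·(x−α', y−β') contains the linear polynomial f = (β'−β)(x−α) − (α'−α)(y−β), and f vanishes at both P and Q. -/
import Mathlib


set_option synthInstance.maxHeartbeats 1000000

open MvPolynomial

/-- In the coordinate ring `R = K[x,y]/(y² - x³ - ax - b)` of a nonsingular elliptic curve,
for points `P = (α, β)`, `Q = (α', β')` on the curve with `α ≠ α'`, the line
`f = (β'-β)(x-α) - (α'-α)(y-β)` through `P` and `Q` lies in the product of maximal ideals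
`(x-α, y-β)·(x-α', y-β')`, and `f` vanishes at both `P` and `Q`. -/
theorem stmt15 {K : Type*} [Field K] (h2 : (2 : K) ≠ 0) (h3 : (3 : K) ≠ 0)
    (a b : K) (hns : 4 * a ^ 3 + 27 * b ^ 2 ≠ 0)
    (α β α' β' : K) (hP : β ^ 2 = α ^ 3 + a * α + b) (hQ : β' ^ 2 = α' ^ 3 + a * α' + b)
    (hαα' : α ≠ α') :
    let x : MvPolynomial (Fin 2) K := X 0
    let y : MvPolynomial (Fin 2) K := X 1
    let I : Ideal (MvPolynomial (Fin 2) K) := Ideal.span {y ^ 2 - x ^ 3 - C a * x - C b}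
    let π := Ideal.Quotient.mk I
    let f : MvPolynomial (Fin 2) K := C (β' - β) * (x - C α) - C (α' - α) * (y - C β)
    let mP : Ideal (MvPolynomial (Fin 2) K ⧸ I) := Ideal.span {π (x - C α), π (y - C β)}
    let mQ : Ideal (MvPolynomial (Fin 2) K ⧸ I) := Ideal.span {π (x - C α'), π (y - C β')}
    π f ∈ mP * mQ ∧ eval ![α, β] f = 0 ∧ eval ![α', β'] f = 0 := by
  intro x y I π f mP mQ
  refine ⟨?_, ?_, ?_⟩
  · have hf : f = (y - C β) * (x - C α') - (x - C α) * (y - C β') := by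
      simp only [f, map_sub]
      ring
    rw [hf, map_sub, map_mul, map_mul]
    exact sub_mem
      (Ideal.mul_mem_mul
        (Ideal.subset_span (Set.mem_insert_of_mem _ rfl))
        (Ideal.subset_span (Set.mem_insert _ _)))
      (Ideal.mul_mem_mul
        (Ideal.subset_span (Set.mem_insert _ _))
        (Ideal.subset_span (Set.mem_insert_of_mem _ rfl)))
  · simp [f, x, y]
  · simp [f, x, y]
    ring
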